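/- arXiv:2405.10649 — 2 statements merged into one kernel-verified Lean document; each statement's English description precedes it below -/
import Mathlib

section
/- Let H = Σ_{i=0}^{Ψ} h_i S^i be a graph filter of order Ψ built from a graph shift operator S of the graph G, and let D_q, D_{q'} ⊆ V be two node subsets such that d_G(k,m) > 2Ψ for every k ∈ D_q and every m ∈ D_{q'}. Then the column spaces spanned by the corresponding columns of H are orthogonal: for every vector u in the span of {H_k : k ∈ D_q} and every vector v in the span of {H_m : m ∈ D_{q'}}, it holds that u^T v = 0. -/
/-!
Call a matrix `r`-local on `G` if its `(k, m)` entry vanishes whenever `d_G(k, m) > r`.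
By the triangle inequality the product of an `r`-local and an `s`-local matrix is
`(r + s)`-local, so `S ^ i` is `i`-local and a filter of order `Ψ` is `Ψ`-local. The inner
product of the columns `H_k` and `H_m` is the entry `(Hᵀ H)_{k m}` of a `2Ψ`-local matrix,
hence vanishes when `d_G(k, m) > 2Ψ`; bilinearity extends this to the spans.
-/

namespace SimpleGraph

open Matrix

variable {V R : Type*} (G : SimpleGraph V)

def IsLocalMatrix [Zero R] (r : ℕ) (A : Matrix V V R) : Prop :=
  ∀ k m, (r : ℕ∞) < G.edist k m → A k m = 0

variable {G}

theorem isLocalMatrix_one [DecidableEq V] [Zero R] [One R] :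
    G.IsLocalMatrix 0 (1 : Matrix V V R) := by
  intro k m hkm
  have hne : k ≠ m := by
    rintro rfl
    simp at hkm
  exact Matrix.one_apply_ne hne

namespace IsLocalMatrix

theorem mono [Zero R] {r s : ℕ} {A : Matrix V V R} (hA : G.IsLocalMatrix r A) (hrs : r ≤ s) :
    G.IsLocalMatrix s A :=
  fun k m hkm => hA k m (lt_of_le_of_lt (by exact_mod_cast hrs) hkm)

theorem transpose [Zero R] {r : ℕ} {A : Matrix V V R} (hA : G.IsLocalMatrix r A) :
    G.IsLocalMatrix r Aᵀ :=
  fun k m hkm => hA m k (G.edist_comm ▸ hkm)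

theorem mul [Fintype V] [NonUnitalNonAssocSemiring R] {r s : ℕ} {A B : Matrix V V R}
    (hA : G.IsLocalMatrix r A) (hB : G.IsLocalMatrix s B) : G.IsLocalMatrix (r + s) (A * B) := by
  intro k m hkm
  rw [Matrix.mul_apply]
  refine Finset.sum_eq_zero fun j _ => ?_
  by_cases hkj : (r : ℕ∞) < G.edist k j
  · rw [hA k j hkj, zero_mul]
  · have hjm : (s : ℕ∞) < G.edist j m := by
      by_contra! hjm
      have : G.edist k m ≤ r + s :=
        G.edist_triangle.trans (add_le_add (not_lt.mp hkj) hjm)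
      exact absurd hkm (by exact_mod_cast this.not_gt)
    rw [hB j m hjm, mul_zero]

theorem pow [Fintype V] [DecidableEq V] [Semiring R] {r : ℕ} {A : Matrix V V R}
    (hA : G.IsLocalMatrix r A) (i : ℕ) : G.IsLocalMatrix (r * i) (A ^ i) := by
  induction i with
  | zero => simpa using isLocalMatrix_one
  | succ i ih => simpa [pow_succ, mul_add] using ih.mul hA

theorem sum_smul_pow [Fintype V] [DecidableEq V] [Semiring R] {S : Matrix V V R}
    (hS : G.IsLocalMatrix 1 S) (Ψ : ℕ) (h : ℕ → R) :
    G.IsLocalMatrix Ψ (∑ i ∈ Finset.range (Ψ + 1), h i • S ^ i) := by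
  intro k m hkm
  rw [Matrix.sum_apply]
  refine Finset.sum_eq_zero fun i hi => ?_
  have hiΨ : i ≤ Ψ := Nat.lt_succ_iff.mp (Finset.mem_range.mp hi)
  have hSi : G.IsLocalMatrix Ψ (S ^ i) := (one_mul i ▸ hS.pow i).mono hiΨ
  rw [Matrix.smul_apply, hSi k m hkm, smul_zero]

theorem dotProduct_col_eq_zero [Fintype V] [NonUnitalNonAssocSemiring R] {r s : ℕ}
    {A B : Matrix V V R} (hA : G.IsLocalMatrix r A) (hB : G.IsLocalMatrix s B) {k m : V}
    (hkm : ((r + s : ℕ) : ℕ∞) < G.edist k m) :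
    dotProduct (fun j => A j k) (fun j => B j m) = 0 :=
  hA.transpose.mul hB k m hkm

end IsLocalMatrix

end SimpleGraph

theorem graphFilter_column_spaces_orthogonal_general {V : Type*} [Fintype V] [DecidableEq V]
    (G : SimpleGraph V) (S : Matrix V V ℝ)
    (hS : ∀ k m : V, (1 : ℕ∞) < G.edist k m → S k m = 0)
    (Ψ : ℕ) (h : ℕ → ℝ) (H : Matrix V V ℝ)
    (hH : H = ∑ i ∈ Finset.range (Ψ + 1), h i • S ^ i)
    (Dq Dq' : Set V)
    (hsep : ∀ k ∈ Dq, ∀ m ∈ Dq', ((2 * Ψ : ℕ) : ℕ∞) < G.edist k m)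
    (u v : V → ℝ)
    (hu : u ∈ Submodule.span ℝ {w : V → ℝ | ∃ k ∈ Dq, w = fun j => H j k})
    (hv : v ∈ Submodule.span ℝ {w : V → ℝ | ∃ m ∈ Dq', w = fun j => H j m}) :
    dotProduct u v = 0 := by
  have hH_local : G.IsLocalMatrix Ψ H := hH ▸ SimpleGraph.IsLocalMatrix.sum_smul_pow hS Ψ h
  refine (Submodule.mem_bot ℝ).mp <|
    LinearMap.BilinMap.apply_apply_mem_of_mem_span ⊥ _ _ (dotProductBilin ℝ ℝ) ?_ u v hu hv
  rintro _ ⟨k, hk, rfl⟩ _ ⟨m, hm, rfl⟩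
  exact (Submodule.mem_bot ℝ).mpr <|
    hH_local.dotProduct_col_eq_zero hH_local (two_mul Ψ ▸ hsep k hk m hm)

/-- Let `H = ∑_{i=0}^{Ψ} h i • S ^ i` be a graph filter built from a graph
shift operator `S` of `G`, and let `D_q`, `D_q'` be node subsets with `d_G(k,m) > 2Ψ` for
every `k ∈ D_q` and `m ∈ D_q'`. Then the corresponding column spaces of `H` are
orthogonal: for every `u` in the span of `{H_k : k ∈ D_q}` and every `v` in the span of
`{H_m : m ∈ D_q'}`, one has `uᵀ v = 0`. -/
theorem graphFilter_column_spaces_orthogonal {V : Type*} [Fintype V] [DecidableEq V]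
    (G : SimpleGraph V) (S : Matrix V V ℝ)
    (hS : ∀ k m : V, (1 : ℕ∞) < G.edist k m → S k m = 0)
    (Ψ : ℕ) (hΨ : 1 ≤ Ψ) (h : ℕ → ℝ) (H : Matrix V V ℝ)
    (hH : H = ∑ i ∈ Finset.range (Ψ + 1), h i • S ^ i)
    (Dq Dq' : Set V)
    (hsep : ∀ k ∈ Dq, ∀ m ∈ Dq', ((2 * Ψ : ℕ) : ℕ∞) < G.edist k m)
    (u v : V → ℝ)
    (hu : u ∈ Submodule.span ℝ {w : V → ℝ | ∃ k ∈ Dq, w = fun j => H j k})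
    (hv : v ∈ Submodule.span ℝ {w : V → ℝ | ∃ m ∈ Dq', w = fun j => H j m}) :
    dotProduct u v = 0 :=
  graphFilter_column_spaces_orthogonal_general G S hS Ψ h H hH Dq Dq' hsep u v hu hv
end

section
/- Let H = Σ_{i=0}^{Ψ} h_i S^i be a graph filter of order Ψ built from a graph shift operator S of the graph G, and let D_q, D_{q'} ⊆ V be two node subsets such that d_G(k,m) > 2Ψ for every k ∈ D_q and every m ∈ D_{q'}. Let Ω_q ⊆ D_q and let x ∈ ℝ^{|V|} be a graph signal supported on Ω_q (x_k = 0 for k ∉ Ω_q). Then the orthogonal projection of the filtered signal Hx onto the column space of H_{D_{q'}} (the span of the columns {H_m : m ∈ D_{q'}}) is the zero vector: P_{D_{q'}} (Hx) = 0. -/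
/-!
A matrix is `r`-local on a graph when its `(k, m)` entry vanishes as soon as `d_G(k, m) > r`.
By the triangle inequality locality radii add under products, so the filter `H` is `Ψ`-local and
the Gram matrix `Hᵀ H` of its columns is `2Ψ`-local. Hence every column `H_m` with `m ∈ D_q'`
is orthogonal to `H x`: the inner product is `(Hᵀ H x)_m`, which only involves entries `(m, k)`
with `k ∈ Ω_q ⊆ D_q`, all of them at distance more than `2Ψ`.
-/

open Matrix

namespace Matrix

variable {V R : Type*}

def IsLocal [Zero R] (G : SimpleGraph V) (r : ℕ) (A : Matrix V V R) : Prop :=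
  ∀ k m, (r : ℕ∞) < G.edist k m → A k m = 0

variable {G : SimpleGraph V} {r s : ℕ}

namespace IsLocal

theorem mono [Zero R] {A : Matrix V V R} (hA : A.IsLocal G r) (hrs : r ≤ s) :
    A.IsLocal G s :=
  fun k m hkm => hA k m (lt_of_le_of_lt (by exact_mod_cast hrs) hkm)

theorem transpose [Zero R] {A : Matrix V V R} (hA : A.IsLocal G r) : Aᵀ.IsLocal G r :=
  fun k m hkm => hA m k (G.edist_comm ▸ hkm)

theorem smul [Zero R] [SMulZeroClass R R] (c : R) {A : Matrix V V R} (hA : A.IsLocal G r) :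
    (c • A).IsLocal G r :=
  fun k m hkm => by rw [smul_apply, hA k m hkm, smul_zero]

theorem sum [AddCommMonoid R] {ι : Type*} (t : Finset ι) {A : ι → Matrix V V R}
    (hA : ∀ i ∈ t, (A i).IsLocal G r) : (∑ i ∈ t, A i).IsLocal G r :=
  fun k m hkm => by
    rw [Matrix.sum_apply]
    exact Finset.sum_eq_zero fun i hi => hA i hi k m hkm

theorem one [DecidableEq V] [Zero R] [One R] : (1 : Matrix V V R).IsLocal G 0 :=
  fun k m hkm => one_apply_ne (by rintro rfl; simp at hkm)

theorem mul [Fintype V] [NonUnitalNonAssocSemiring R] {A B : Matrix V V R}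
    (hA : A.IsLocal G r) (hB : B.IsLocal G s) : (A * B).IsLocal G (r + s) := by
  intro k m hkm
  rw [mul_apply]
  refine Finset.sum_eq_zero fun j _ => ?_
  by_cases hkj : (r : ℕ∞) < G.edist k j
  · rw [hA k j hkj, zero_mul]
  by_cases hjm : (s : ℕ∞) < G.edist j m
  · rw [hB j m hjm, mul_zero]
  have : G.edist k m ≤ r + s :=
    G.edist_triangle.trans (add_le_add (not_lt.mp hkj) (not_lt.mp hjm))
  exact absurd hkm (by push_cast; exact not_lt.mpr this)

theorem pow [Fintype V] [DecidableEq V] [Semiring R] {S : Matrix V V R}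
    (hS : S.IsLocal G r) (i : ℕ) : (S ^ i).IsLocal G (i * r) := by
  induction i with
  | zero => simpa using one
  | succ i ih => simpa [pow_succ, add_mul] using ih.mul hS

theorem mulVec_apply_eq_zero [Fintype V] [NonUnitalNonAssocSemiring R] {A : Matrix V V R}
    (hA : A.IsLocal G r) {x : V → R} {m : V}
    (hx : ∀ k, G.edist m k ≤ r → x k = 0) : (A *ᵥ x) m = 0 := by
  refine Finset.sum_eq_zero fun k _ => ?_
  by_cases hmk : (r : ℕ∞) < G.edist m k
  · exact mul_eq_zero_of_left (hA m k hmk) _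
  · exact mul_eq_zero_of_right _ (hx k (not_lt.mp hmk))

end IsLocal

theorem isLocal_sum_smul_pow [Fintype V] [DecidableEq V] [CommSemiring R] {S : Matrix V V R}
    (hS : S.IsLocal G 1) (Ψ : ℕ) (h : ℕ → R) :
    (∑ i ∈ Finset.range (Ψ + 1), h i • S ^ i).IsLocal G Ψ :=
  IsLocal.sum _ fun i hi =>
    ((hS.pow i).smul (h i)).mono (by simpa using Finset.mem_range_succ_iff.mp hi)

end Matrix

theorem Submodule.mem_orthogonal_span_iff {𝕜 E : Type*} [RCLike 𝕜] [NormedAddCommGroup E]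
    [InnerProductSpace 𝕜 E] {s : Set E} {v : E} :
    v ∈ (span 𝕜 s)ᗮ ↔ ∀ u ∈ s, inner 𝕜 u v = 0 := by
  rw [← span_singleton_le_iff_mem, ← IsOrtho, isOrtho_comm, isOrtho_span]
  simp

theorem projection_filtered_signal_other_subset_eq_zero_general {V : Type*} [Fintype V]
    [DecidableEq V]
    (G : SimpleGraph V) (S : Matrix V V ℝ)
    (hS : ∀ k m : V, (1 : ℕ∞) < G.edist k m → S k m = 0)
    (Ψ : ℕ) (h : ℕ → ℝ) (H : Matrix V V ℝ)
    (hH : H = ∑ i ∈ Finset.range (Ψ + 1), h i • S ^ i)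
    (Dq Dq' : Set V)
    (hsep : ∀ k ∈ Dq, ∀ m ∈ Dq', ((2 * Ψ : ℕ) : ℕ∞) < G.edist k m)
    (Ωq : Set V) (hΩq : Ωq ⊆ Dq)
    (x : V → ℝ) (hx : ∀ k : V, k ∉ Ωq → x k = 0) :
    Submodule.orthogonalProjectionOnto
      (Submodule.span ℝ
        ((fun m => (EuclideanSpace.equiv V ℝ).symm (fun j => H j m)) '' Dq'))
      ((EuclideanSpace.equiv V ℝ).symm (H.mulVec x)) = 0 := by
  have hH : H.IsLocal G Ψ := hH ▸ isLocal_sum_smul_pow hS Ψ h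
  have hGram : (Hᵀ * H).IsLocal G (2 * Ψ) := two_mul Ψ ▸ hH.transpose.mul hH
  rw [Submodule.orthogonalProjectionOnto_eq_zero_iff, Submodule.mem_orthogonal_span_iff]
  rintro _ ⟨m, hm, rfl⟩
  have hinner : inner ℝ ((EuclideanSpace.equiv V ℝ).symm (fun j => H j m))
      ((EuclideanSpace.equiv V ℝ).symm (H *ᵥ x)) = ((Hᵀ * H) *ᵥ x) m := by
    rw [← mulVec_mulVec]
    exact dotProduct_comm _ _
  rw [hinner]
  refine hGram.mulVec_apply_eq_zero fun k hmk => hx k fun hk => ?_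
  exact not_lt.mpr hmk (G.edist_comm ▸ hsep k (hΩq hk) m hm)

/-- Let `H = ∑_{i=0}^{Ψ} h i • S ^ i` be a graph filter built from a
graph shift operator `S` of `G`, and let `D_q`, `D_q'` be node subsets with
`d_G(k,m) > 2Ψ` for every `k ∈ D_q` and `m ∈ D_q'`. If `x` is a graph signal supported
on `Ω_q ⊆ D_q`, then the orthogonal projection of the filtered signal `H x` onto the
span of the columns `{H_m : m ∈ D_q'}` is zero: `P_{D_q'} (H x) = 0`. -/
theorem projection_filtered_signal_other_subset_eq_zero {V : Type*} [Fintype V]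
    [DecidableEq V]
    (G : SimpleGraph V) (S : Matrix V V ℝ)
    (hS : ∀ k m : V, (1 : ℕ∞) < G.edist k m → S k m = 0)
    (Ψ : ℕ) (hΨ : 1 ≤ Ψ) (h : ℕ → ℝ) (H : Matrix V V ℝ)
    (hH : H = ∑ i ∈ Finset.range (Ψ + 1), h i • S ^ i)
    (Dq Dq' : Set V)
    (hsep : ∀ k ∈ Dq, ∀ m ∈ Dq', ((2 * Ψ : ℕ) : ℕ∞) < G.edist k m)
    (Ωq : Set V) (hΩq : Ωq ⊆ Dq)
    (x : V → ℝ) (hx : ∀ k : V, k ∉ Ωq → x k = 0) :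
    Submodule.orthogonalProjectionOnto
      (Submodule.span ℝ
        ((fun m => (EuclideanSpace.equiv V ℝ).symm (fun j => H j m)) '' Dq'))
      ((EuclideanSpace.equiv V ℝ).symm (H.mulVec x)) = 0 :=
  projection_filtered_signal_other_subset_eq_zero_general G S hS Ψ h H hH Dq Dq' hsep Ωq hΩq x hx
end
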